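/- Let p be an odd prime, let q ∈ ℚ_p satisfy |q−1|_p < 1, let f : ℤ_p → ℚ_p be continuous, and let n be a positive integer. Then the sequences N ↦ ((1+q)/(1+q^{p^N})) ∑_{x=0}^{p^N−1} (−1)^x f(x+n) and N ↦ ((1+q)/(1+q^{p^N})) ∑_{x=0}^{p^N−1} (−1)^x f(x) converge in ℚ_p (their limits are I_{−q}(q^{−x}f_n) and I_{−q}(q^{−x}f), since (−q)^x q^{−x} = (−1)^x), and I_{−q}(q^{−x}f_n) + (−1)^{n−1}·I_{−q}(q^{−x}f) = [2]_q·∑_{l=0}^{n−1} (−1)^{n−l−1} f(l), where [2]_q = 1+q. -/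

import Mathlib

/-!
Write `S_N(g) = ∑_{x < p^N} (-1)^x g(x)`. Splitting `[0, p^{N+1})` into `p` blocks of the odd
length `p^N` writes `S_{N+1}(g) - S_N(g)` as a signed sum of differences `g(i p^N + j) - g(j)`,
which are uniformly small because `g` is uniformly continuous on the compact `ℤ_p`; as `ℚ_p` is
ultrametric, `S_N(g)` is Cauchy. For odd `M`, shifting the index gives
`S(g(· + 1)) + S(g) = g(0) + g(M)`, and alternating over `n` shifts gives
`S(f(· + n)) + (-1)^{n-1} S(f) = ∑_{l<n} (-1)^{n-1-l} (f(l) + f(l + p^N))`,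
whose right side tends to `2 ∑_{l<n} (-1)^{n-1-l} f(l)`. Finally `q^{p^N} → 1` because
`p ∣ q - 1` forces `p^{N+1} ∣ q^{p^N} - 1`, so the prefactor tends to `(1 + q)/2`.
-/

open Filter Finset Topology

section Alternating

variable {R : Type*} [Ring R]

theorem sum_range_mul_eq_sum_sum {M : Type*} [AddCommMonoid M] (g : ℕ → M) (k m : ℕ) :
    ∑ x ∈ range (k * m), g x = ∑ i ∈ range k, ∑ j ∈ range m, g (i * m + j) := by
  induction k with
  | zero => simp
  | succ k ih => rw [Nat.succ_mul, sum_range_add, ih, sum_range_succ]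

theorem sum_range_mul_neg_one_pow_mul_sub {k m : ℕ} (hk : Odd k) (hm : Odd m) (g : ℕ → R) :
    ∑ x ∈ range (k * m), (-1) ^ x * g x - ∑ x ∈ range m, (-1) ^ x * g x =
      ∑ i ∈ range k, ∑ j ∈ range m, (-1) ^ (i + j) * (g (i * m + j) - g j) := by
  have hblock : ∀ i j : ℕ, ((-1 : R) ^ (i * m + j)) = (-1) ^ (i + j) := fun i j => by
    rw [pow_add, pow_add, mul_comm i, pow_mul, hm.neg_one_pow]
  have hk1 : ∑ i ∈ range k, (-1 : R) ^ i = 1 := by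
    rw [neg_one_geom_sum, if_neg (Nat.not_even_iff_odd.mpr hk)]
  have hrepeat : ∑ x ∈ range m, (-1) ^ x * g x =
      ∑ i ∈ range k, (-1 : R) ^ i * ∑ j ∈ range m, (-1) ^ j * g j := by
    rw [← sum_mul, hk1, one_mul]
  rw [sum_range_mul_eq_sum_sum, hrepeat, ← sum_sub_distrib]
  refine sum_congr rfl fun i _ => ?_
  rw [mul_sum, ← sum_sub_distrib]
  refine sum_congr rfl fun j _ => ?_
  rw [hblock, pow_add, mul_sub, mul_assoc, mul_assoc]

theorem sum_range_neg_one_pow_mul_add_one_add {m : ℕ} (hm : Odd m) (g : ℕ → R) :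
    ∑ x ∈ range m, (-1) ^ x * g (x + 1) + ∑ x ∈ range m, (-1) ^ x * g x = g 0 + g m := by
  have h := sum_range_succ' (fun x => (-1 : R) ^ x * g x) m
  rw [sum_range_succ, hm.neg_one_pow] at h
  simp only [pow_succ, mul_neg_one, neg_mul, sum_neg_distrib, pow_zero, one_mul] at h
  rw [← sub_eq_zero] at h ⊢
  rw [← h]
  abel

theorem add_neg_one_pow_mul_eq_sum_range (a : ℕ → R) {n : ℕ} (hn : 0 < n) :
    a n + (-1) ^ (n - 1) * a 0 = ∑ l ∈ range n, (-1) ^ (n - 1 - l) * (a (l + 1) + a l) := by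
  obtain ⟨m, rfl⟩ : ∃ m, n = m + 1 := ⟨n - 1, by omega⟩
  simp only [Nat.add_sub_cancel]
  induction m with
  | zero => simp
  | succ m ih =>
    have hshift : ∀ l ∈ range (m + 1), (-1 : R) ^ (m + 1 - l) * (a (l + 1) + a l) =
        -((-1) ^ (m - l) * (a (l + 1) + a l)) := fun l hl => by
      rw [Nat.sub_add_comm (by simpa [Nat.lt_succ_iff] using hl), pow_succ]; noncomm_ring
    rw [sum_range_succ, sum_congr rfl hshift, sum_neg_distrib, ← ih (by omega), Nat.sub_self,
      pow_succ]
    noncomm_ring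

theorem sum_range_neg_one_pow_mul_add_shift {m : ℕ} (hm : Odd m) (g : ℕ → R) {n : ℕ}
    (hn : 0 < n) :
    ∑ x ∈ range m, (-1) ^ x * g (x + n) + (-1) ^ (n - 1) * ∑ x ∈ range m, (-1) ^ x * g x =
      ∑ l ∈ range n, (-1) ^ (n - 1 - l) * (g l + g (m + l)) := by
  have h := add_neg_one_pow_mul_eq_sum_range (fun k => ∑ x ∈ range m, (-1) ^ x * g (x + k)) hn
  simp only [add_zero] at h
  rw [h]
  refine sum_congr rfl fun l _ => congrArg _ ?_
  simpa [add_assoc, add_comm 1] using sum_range_neg_one_pow_mul_add_one_add hm (fun y => g (y + l))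

end Alternating

namespace PadicInt

variable {p : ℕ} [Fact p.Prime]

theorem tendsto_p_pow_atTop_nhds_zero : Tendsto (fun N => (p : ℤ_[p]) ^ N) atTop (𝓝 0) :=
  tendsto_pow_atTop_nhds_zero_of_norm_lt_one Padic.norm_p_lt_one

theorem tendsto_norm_p_pow_atTop_nhds_zero :
    Tendsto (fun N => ‖(p : ℤ_[p]) ^ N‖) atTop (𝓝 0) := by
  simpa only [norm_zero] using (tendsto_p_pow_atTop_nhds_zero (p := p)).norm

theorem tendsto_pow_prime_pow_nhds_one {z : ℤ_[p]} (hz : ‖z - 1‖ < 1) :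
    Tendsto (fun N => z ^ p ^ N) atTop (𝓝 1) := by
  rw [tendsto_iff_norm_sub_tendsto_zero]
  refine squeeze_zero (fun _ => norm_nonneg _) (fun N => ?_)
    (tendsto_norm_p_pow_atTop_nhds_zero (p := p))
  obtain ⟨c, hc⟩ : (p : ℤ_[p]) ^ N ∣ z ^ p ^ N - 1 := by
    have h := dvd_sub_pow_of_dvd_sub ((norm_lt_one_iff_dvd _).mp hz) N
    rw [one_pow] at h
    exact (pow_dvd_pow _ N.le_succ).trans h
  rw [hc, norm_mul]
  exact mul_le_of_le_one_right (norm_nonneg _) (PadicInt.norm_le_one c)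

end PadicInt

namespace Padic

variable {p : ℕ} [Fact p.Prime]

theorem tendsto_pow_prime_pow_nhds_one {q : ℚ_[p]} (hq : ‖q - 1‖ < 1) :
    Tendsto (fun N => q ^ p ^ N) atTop (𝓝 1) := by
  have hq_int : ‖q‖ ≤ 1 := by
    simpa using (IsUltrametricDist.norm_add_le_max (q - 1) 1).trans (max_le hq.le norm_one.le)
  let z : ℤ_[p] := ⟨q, hq_int⟩
  have hz : ‖z - 1‖ < 1 := hq
  exact (continuous_subtype_val.tendsto _).comp (PadicInt.tendsto_pow_prime_pow_nhds_one hz)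

theorem norm_sum_range_pow_succ_sub_le (hp : Odd p) (g : ℤ_[p] → ℚ_[p]) (N : ℕ) {ε : ℝ}
    (hε : 0 ≤ ε) (hg : ∀ a b : ℤ_[p], ‖a - b‖ ≤ ‖(p : ℤ_[p]) ^ N‖ → ‖g a - g b‖ ≤ ε) :
    ‖∑ x ∈ range (p ^ (N + 1)), (-1) ^ x * g x - ∑ x ∈ range (p ^ N), (-1) ^ x * g x‖ ≤ ε := by
  rw [pow_succ', sum_range_mul_neg_one_pow_mul_sub (g := fun x : ℕ => g x) hp hp.pow]
  refine IsUltrametricDist.norm_sum_le_of_forall_le_of_nonneg hε fun i _ => ?_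
  refine IsUltrametricDist.norm_sum_le_of_forall_le_of_nonneg hε fun j _ => ?_
  rw [norm_mul, norm_pow, norm_neg, norm_one, one_pow, one_mul]
  refine hg _ _ ?_
  rw [Nat.cast_add, Nat.cast_mul, add_sub_cancel_right, Nat.cast_pow, norm_mul]
  exact mul_le_of_le_one_left (norm_nonneg _) (PadicInt.norm_le_one _)

theorem exists_tendsto_sum_range_pow_neg_one_pow_mul (hp : Odd p) {g : ℤ_[p] → ℚ_[p]}
    (hg : Continuous g) :
    ∃ L, Tendsto (fun N => ∑ x ∈ range (p ^ N), (-1) ^ x * g x) atTop (𝓝 L) := by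
  refine cauchySeq_tendsto_of_complete <|
    NonarchimedeanAddGroup.cauchySeq_of_tendsto_sub_nhds_zero ?_
  rw [NormedAddGroup.tendsto_nhds_zero]
  intro ε hε
  obtain ⟨δ, hδ, hgδ⟩ := Metric.uniformContinuous_iff.mp
    (CompactSpace.uniformContinuous_of_continuous hg) (ε / 2) (half_pos hε)
  filter_upwards [(PadicInt.tendsto_norm_p_pow_atTop_nhds_zero (p := p)).eventually
    (gt_mem_nhds hδ)] with N hN
  refine (norm_sum_range_pow_succ_sub_le hp g N (half_pos hε).le fun a b hab => ?_).trans_lt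
    (half_lt_self hε)
  rw [← dist_eq_norm]
  exact (hgδ (((dist_eq_norm a b).trans_le hab).trans_lt hN)).le

end Padic

/-- Proposition 5: for continuous `f : ℤ_p → ℚ_p` and `n ≥ 1`, the fermionic Riemann sums
with weight `(-1)^x = (-q)^x q^{-x}` for `f_n(x) = f(x+n)` and for `f` converge to limits
`I_{-q}(q^{-x} f_n)` and `I_{-q}(q^{-x} f)`, and
`I_{-q}(q^{-x} f_n) + (-1)^{n-1} I_{-q}(q^{-x} f) = [2]_q ∑_{l=0}^{n-1} (-1)^{n-l-1} f(l)`. -/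
theorem fermionic_twisted_integral_iterated (p : ℕ) [Fact (Nat.Prime p)] (hp : Odd p)
    (q : ℚ_[p]) (hq : ‖q - 1‖ < 1) (f : ℤ_[p] → ℚ_[p]) (hf : Continuous f)
    (n : ℕ) (hn : 0 < n) :
    ∃ Iₙ I₀ : ℚ_[p],
      Filter.Tendsto
        (fun N : ℕ => ((1 + q) / (1 + q ^ p ^ N)) *
          ∑ x ∈ Finset.range (p ^ N), (-1) ^ x * f ((x : ℤ_[p]) + (n : ℤ_[p])))
        Filter.atTop (nhds Iₙ) ∧
      Filter.Tendsto
        (fun N : ℕ => ((1 + q) / (1 + q ^ p ^ N)) *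
          ∑ x ∈ Finset.range (p ^ N), (-1) ^ x * f (x : ℤ_[p]))
        Filter.atTop (nhds I₀) ∧
      Iₙ + (-1) ^ (n - 1) * I₀ =
        (1 + q) * ∑ l ∈ Finset.range n, (-1) ^ (n - 1 - l) * f (l : ℤ_[p]) := by
  obtain ⟨I, hI⟩ := Padic.exists_tendsto_sum_range_pow_neg_one_pow_mul hp hf
  have hshift (N : ℕ) :=
    sum_range_neg_one_pow_mul_add_shift (hp.pow : Odd (p ^ N)) (fun y : ℕ => f y) hn
  push_cast at hshift
  have hf_shift (l : ℕ) : Tendsto (fun N => f (p ^ N + l)) atTop (𝓝 (f l)) := by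
    have h := (hf.tendsto _).comp (PadicInt.tendsto_p_pow_atTop_nhds_zero.add_const (l : ℤ_[p]))
    rwa [zero_add] at h
  have hsum := tendsto_finsetSum (range n) fun l _ =>
    ((tendsto_const_nhds (x := f l)).add (hf_shift l)).const_mul ((-1 : ℚ_[p]) ^ (n - 1 - l))
  have hIn := (hsum.sub (hI.const_mul ((-1) ^ (n - 1)))).congr fun N => by
    rw [← hshift N, add_sub_cancel_right]
  have hc : Tendsto (fun N => (1 + q) / (1 + q ^ p ^ N)) atTop (𝓝 ((1 + q) / (1 + 1))) :=
    tendsto_const_nhds.div (tendsto_const_nhds.add (Padic.tendsto_pow_prime_pow_nhds_one hq))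
      (by norm_num)
  refine ⟨_, _, hc.mul hIn, hc.mul hI, ?_⟩
  simp only [mul_add, sum_add_distrib]
  ring
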